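/- arXiv:2605.08688 — 4 statements merged into one kernel-verified Lean document; each statement's English description precedes it below -/
import Mathlib

section
/- In a diagnosis setting that is a weak model of failure, diagnoses are upward closed: if Δ ⊆ 𝔠 is a diagnosis and Δ ⊆ Δ' ⊆ 𝔠, then Δ' is a diagnosis. -/
/-- A propositional formula, identified with the set of valuations satisfying it. -/
abbrev PropFormula (V : Type*) := (V → Bool) → Prop

/-- A set of formulas is consistent if some valuation satisfies all of them. -/
def Consistent {V : Type*} (T : Set (PropFormula V)) : Prop :=
  ∃ v : V → Bool, ∀ φ ∈ T, φ v

/-- A consistency-based diagnosis setting: a finite set of components, injective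
abnormality variables, a model `M`, and an observation `Obs`. -/
structure DiagSetting (V α : Type*) where
  comps : Finset α
  ab : α → V
  ab_inj : Function.Injective ab
  M : Set (PropFormula V)
  Obs : Set (PropFormula V)

variable {V α : Type*} [DecidableEq α]

/-- `Th(Δ) = M ∪ Obs ∪ { ab C is true : C ∈ Δ } ∪ { ab C is false : C ∈ 𝔠 \ Δ }`. -/
def DiagSetting.Th (S : DiagSetting V α) (Δ : Finset α) : Set (PropFormula V) :=
  S.M ∪ S.Obs ∪ {φ | ∃ C ∈ Δ, φ = fun v => v (S.ab C) = true}
    ∪ {φ | ∃ C ∈ S.comps \ Δ, φ = fun v => v (S.ab C) = false}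

/-- `Δ` is a diagnosis if `Δ ⊆ 𝔠` and `Th(Δ)` is consistent. -/
def DiagSetting.Diagnosis (S : DiagSetting V α) (Δ : Finset α) : Prop :=
  Δ ⊆ S.comps ∧ Consistent (S.Th Δ)

/-- A diagnosis is minimal if no proper subset of it is a diagnosis. -/
def DiagSetting.MinimalDiagnosis (S : DiagSetting V α) (Δ : Finset α) : Prop :=
  S.Diagnosis Δ ∧ ∀ Δ' ⊂ Δ, ¬ S.Diagnosis Δ'

/-- `C` is a counterfactual cause if `Th({C})` is consistent. -/
def DiagSetting.CounterfactualCause (S : DiagSetting V α) (C : α) : Prop :=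
  C ∈ S.comps ∧ Consistent (S.Th {C})

/-- `Γ ⊆ 𝔠 \ {C}` is a contingency set for `C ∈ 𝔠` if `Th(Γ)` is inconsistent
and `Th(Γ ∪ {C})` is consistent. -/
def DiagSetting.ContingencySet (S : DiagSetting V α) (C : α) (Γ : Finset α) : Prop :=
  C ∈ S.comps ∧ Γ ⊆ S.comps.erase C ∧ ¬ Consistent (S.Th Γ) ∧ Consistent (S.Th (insert C Γ))

/-- `C` is an actual cause if it has a contingency set. -/
def DiagSetting.ActualCause (S : DiagSetting V α) (C : α) : Prop :=
  ∃ Γ : Finset α, S.ContingencySet C Γ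

/-- A contingency set for `C` is minimal if no proper subset is a contingency set for `C`. -/
def DiagSetting.MinimalContingencySet (S : DiagSetting V α) (C : α) (Γ : Finset α) : Prop :=
  S.ContingencySet C Γ ∧ ∀ Γ' ⊂ Γ, ¬ S.ContingencySet C Γ'

/-- The truth value of `φ` does not depend on any abnormality variable `ab C'`, `C' ∈ 𝔠`. -/
def DiagSetting.IndepAb (S : DiagSetting V α) (φ : PropFormula V) : Prop :=
  ∀ v v' : V → Bool, (∀ x : V, (∀ C ∈ S.comps, S.ab C ≠ x) → v x = v' x) → (φ v ↔ φ v')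

/-- A weak model of failure: every formula of `M` is semantically of the form
`(ab C is true) ∨ ψ` with `ψ` independent of the abnormality variables, and every
formula of `Obs` is independent of the abnormality variables. -/
def DiagSetting.WeakModel (S : DiagSetting V α) : Prop :=
  (∀ φ ∈ S.M, ∃ C ∈ S.comps, ∃ ψ : PropFormula V,
      S.IndepAb ψ ∧ ∀ v, φ v ↔ (v (S.ab C) = true ∨ ψ v)) ∧
  (∀ φ ∈ S.Obs, S.IndepAb φ)

open Classical in
/-- Responsibility: `1/(1+|Γ|)` for a minimum-cardinality contingency set `Γ` for `C`
if `C` is an actual cause, and `0` otherwise. -/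
noncomputable def DiagSetting.Resp (S : DiagSetting V α) (C : α) : ℚ :=
  if S.ActualCause C then
    1 / (1 + ((sInf {n : ℕ | ∃ Γ : Finset α, S.ContingencySet C Γ ∧ Γ.card = n} : ℕ) : ℚ))
  else 0

/-!
Take a valuation witnessing that `Δ` is a diagnosis and switch on `ab C` for every `C ∈ Δ'`.
In a weak model of failure the formulas of `M` and `Obs` only ever require abnormality
variables to be true, so they stay satisfied; the abnormality literals of `Th(Δ')` hold by
construction, the negative ones because `𝔠 \ Δ' ⊆ 𝔠 \ Δ` and `ab` is injective.
-/

namespace DiagSetting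

variable {κ : Type*} [DecidableEq V] (S : DiagSetting V κ)

def markAbnormal (v : V → Bool) (Δ : Finset κ) : V → Bool :=
  fun x => v x || decide (x ∈ Δ.image S.ab)

variable {S} {v : V → Bool} {Δ : Finset κ}

theorem markAbnormal_ab_of_mem {C : κ} (hC : C ∈ Δ) : S.markAbnormal v Δ (S.ab C) = true := by
  simp [markAbnormal, Finset.mem_image_of_mem S.ab hC]

theorem markAbnormal_ab_of_notMem {C : κ} (hC : C ∉ Δ) :
    S.markAbnormal v Δ (S.ab C) = v (S.ab C) := by
  simp [markAbnormal, S.ab_inj.eq_iff, hC]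

theorem markAbnormal_of_eq_true {x : V} (hx : v x = true) : S.markAbnormal v Δ x = true := by
  simp [markAbnormal, hx]

theorem IndepAb.markAbnormal_iff {φ : PropFormula V} (hφ : S.IndepAb φ) (hΔ : Δ ⊆ S.comps) :
    φ (S.markAbnormal v Δ) ↔ φ v := by
  refine hφ _ _ fun x hx => ?_
  have hxΔ : x ∉ Δ.image S.ab := by
    simpa only [Finset.mem_image, not_exists, not_and] using fun C hC => hx C (hΔ hC)
  simp [markAbnormal, hxΔ]

theorem WeakModel.markAbnormal_of_mem_M_union_Obs (hW : S.WeakModel) (hΔ : Δ ⊆ S.comps)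
    {φ : PropFormula V} (hφ : φ ∈ S.M ∪ S.Obs) (hv : φ v) : φ (S.markAbnormal v Δ) := by
  rcases hφ with hM | hObs
  · obtain ⟨C, -, ψ, hψ, hφψ⟩ := hW.1 φ hM
    rw [hφψ] at hv ⊢
    exact hv.imp markAbnormal_of_eq_true (hψ.markAbnormal_iff hΔ).2
  · exact ((hW.2 φ hObs).markAbnormal_iff hΔ).2 hv

theorem WeakModel.markAbnormal_satisfies_Th [DecidableEq κ] (hW : S.WeakModel)
    (hv : ∀ φ ∈ S.Th Δ, φ v) {Δ' : Finset κ} (hsub : Δ ⊆ Δ') (hsub' : Δ' ⊆ S.comps) :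
    ∀ φ ∈ S.Th Δ', φ (S.markAbnormal v Δ') := by
  rintro φ ((hMObs | ⟨C, hC, rfl⟩) | ⟨C, hC, rfl⟩)
  · exact hW.markAbnormal_of_mem_M_union_Obs hsub' hMObs (hv φ (Or.inl (Or.inl hMObs)))
  · exact markAbnormal_ab_of_mem hC
  · obtain ⟨hCc, hCΔ'⟩ := Finset.mem_sdiff.mp hC
    show S.markAbnormal v Δ' (S.ab C) = false
    rw [markAbnormal_ab_of_notMem hCΔ']
    exact hv _ (Or.inr ⟨C, Finset.mem_sdiff.mpr ⟨hCc, fun h => hCΔ' (hsub h)⟩, rfl⟩)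

end DiagSetting

/-- In a weak model of failure, diagnoses are upward closed. -/
theorem diagnosis_upward_closed
    (S : DiagSetting V α) (hW : S.WeakModel) (Δ Δ' : Finset α)
    (hΔ : S.Diagnosis Δ) (hsub : Δ ⊆ Δ') (hsub' : Δ' ⊆ S.comps) :
    S.Diagnosis Δ' := by
  classical
  obtain ⟨-, v, hv⟩ := hΔ
  exact ⟨hsub', S.markAbnormal v Δ', hW.markAbnormal_satisfies_Th hv hsub hsub'⟩
end

section
/- In any diagnosis setting, if Δ ⊆ 𝔠 is a minimal diagnosis and C ∈ Δ, then Γ := Δ \ {C} is a minimal contingency set for C; in particular, C is an actual cause. -/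
variable {V α : Type*} [DecidableEq α]

theorem Finset.insert_ssubset_of_ssubset_erase {β : Type*} [DecidableEq β] {s t : Finset β} {a : β}
    (ha : a ∈ t) (h : s ⊂ t.erase a) : insert a s ⊂ t := by
  grind

namespace DiagSetting

variable {S : DiagSetting V α} {Δ Γ : Finset α} {C : α}

theorem MinimalDiagnosis.not_consistent_of_ssubset (hΔ : S.MinimalDiagnosis Δ) (hΓ : Γ ⊂ Δ) :
    ¬ Consistent (S.Th Γ) :=
  fun hcons => hΔ.2 Γ hΓ ⟨hΓ.subset.trans hΔ.1.1, hcons⟩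

theorem ContingencySet.diagnosis_insert (h : S.ContingencySet C Γ) :
    S.Diagnosis (insert C Γ) :=
  ⟨Finset.insert_subset h.1 (h.2.1.trans (Finset.erase_subset _ _)), h.2.2.2⟩

theorem MinimalDiagnosis.contingencySet_erase (hΔ : S.MinimalDiagnosis Δ) (hC : C ∈ Δ) :
    S.ContingencySet C (Δ.erase C) := by
  refine ⟨hΔ.1.1 hC, Finset.erase_subset_erase C hΔ.1.1, ?_, ?_⟩
  · exact hΔ.not_consistent_of_ssubset (Finset.erase_ssubset hC)
  · simpa only [Finset.insert_erase hC] using hΔ.1.2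

theorem MinimalDiagnosis.not_contingencySet_of_ssubset_erase (hΔ : S.MinimalDiagnosis Δ)
    (hC : C ∈ Δ) (hΓ : Γ ⊂ Δ.erase C) : ¬ S.ContingencySet C Γ :=
  fun h => hΔ.2 _ (Finset.insert_ssubset_of_ssubset_erase hC hΓ) h.diagnosis_insert

end DiagSetting

/-- If `Δ` is a minimal diagnosis and `C ∈ Δ`, then `Δ \ {C}` is a minimal
contingency set for `C`; in particular, `C` is an actual cause. -/
theorem minimalDiagnosis_erase_minimalContingencySet
    (S : DiagSetting V α) (Δ : Finset α) (C : α)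
    (hΔ : S.MinimalDiagnosis Δ) (hC : C ∈ Δ) :
    S.MinimalContingencySet C (Δ.erase C) ∧ S.ActualCause C := by
  have hcs : S.ContingencySet C (Δ.erase C) := hΔ.contingencySet_erase hC
  exact ⟨⟨hcs, fun _ => hΔ.not_contingencySet_of_ssubset_erase hC⟩, _, hcs⟩
end

section
/- In a diagnosis setting that is a weak model of failure, if the observation Obs is consistent, then the full set of components 𝔠 is a diagnosis; consequently, since 𝔠 is finite, there exists a minimal diagnosis. -/
variable {V α : Type*} [DecidableEq α]

/-- In a weak model of failure with consistent observation, the full set of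
components is a diagnosis; consequently there exists a minimal diagnosis. -/
theorem full_comps_diagnosis_and_exists_minimal
    (S : DiagSetting V α) (hW : S.WeakModel) (hObs : Consistent S.Obs) :
    S.Diagnosis S.comps ∧ ∃ Δ : Finset α, S.MinimalDiagnosis Δ := by
  classical
  have hfull : S.Diagnosis S.comps := by
    obtain ⟨v, hv⟩ := hObs
    set v' : V → Bool := fun x => if ∃ C ∈ S.comps, S.ab C = x then true else v x with hv'def
    have hindep : ∀ φ : PropFormula V, S.IndepAb φ → (φ v ↔ φ v') := by
      intro φ hφ
      exact hφ v v' (fun x hx => by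
        simp only [hv'def]
        rw [if_neg]
        rintro ⟨C, hC, hCx⟩
        exact hx C hC hCx)
    refine ⟨le_refl _, v', ?_⟩
    intro φ hφ
    rcases hφ with ((hM | hO) | hab) | hnab
    · obtain ⟨C, hC, ψ, hψ, hiff⟩ := hW.1 φ hM
      rw [hiff]
      left
      show (if ∃ C' ∈ S.comps, S.ab C' = S.ab C then true else v (S.ab C)) = true
      rw [if_pos ⟨C, hC, rfl⟩]
    · exact (hindep φ (hW.2 φ hO)).mp (hv φ hO)
    · obtain ⟨C, hC, rfl⟩ := hab
      show (if ∃ C' ∈ S.comps, S.ab C' = S.ab C then true else v (S.ab C)) = true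
      rw [if_pos ⟨C, hC, rfl⟩]
    · obtain ⟨C, hC, rfl⟩ := hnab
      simp at hC
  refine ⟨hfull, ?_⟩
  have : (S.comps.powerset.filter (fun Δ => S.Diagnosis Δ)).Nonempty := by
    exact ⟨S.comps, by simp [hfull]⟩
  obtain ⟨Δ, hΔ, hmin⟩ : ∃ m ∈ S.comps.powerset.filter (fun Δ => S.Diagnosis Δ),
      ∀ x ∈ S.comps.powerset.filter (fun Δ => S.Diagnosis Δ), ¬ x < m := by
    obtain ⟨m, hm⟩ := Finset.exists_minimal this
    exact ⟨m, hm.1, fun x hx hlt => hlt.not_ge (hm.2 hx hlt.le)⟩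
  simp only [Finset.mem_filter, Finset.mem_powerset] at hΔ
  refine ⟨Δ, hΔ.2, ?_⟩
  intro Δ' hΔ' hD
  exact hmin Δ' (by simp [Finset.mem_filter, Finset.mem_powerset, hD, hD.1]) hΔ'
end

section
/- In a diagnosis setting that is a weak model of failure, if C ∈ 𝔠 is an actual cause, then Resp(C) = 1 / m, where m is the minimum of |Δ| over all minimal diagnoses Δ with C ∈ Δ (this minimum exists and is taken over a nonempty set). -/
variable {V α : Type*} [DecidableEq α]

/-- Monotonicity of consistency in a weak model of failure. -/
lemma weak_mono (S : DiagSetting V α) (hW : S.WeakModel) {Δ Δ' : Finset α}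
    (hsub : Δ ⊆ Δ') (hΔ' : Δ' ⊆ S.comps) (hc : Consistent (S.Th Δ)) :
    Consistent (S.Th Δ') := by
  classical
  obtain ⟨v, hv⟩ := hc
  refine ⟨fun x => if ∃ C ∈ Δ', S.ab C = x then true else v x, ?_⟩
  have hoff : ∀ x : V, (∀ C ∈ S.comps, S.ab C ≠ x) →
      v x = (if ∃ C ∈ Δ', S.ab C = x then true else v x) := by
    intro x hx
    rw [if_neg]
    rintro ⟨C, hC, rfl⟩
    exact hx C (hΔ' hC) rfl
  intro φ hφ
  rcases hφ with ((hφ | hφ) | hφ) | hφ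
  · obtain ⟨D, hD, ψ, hψind, hψ⟩ := hW.1 φ hφ
    have hv1 : φ v := hv φ (Or.inl (Or.inl (Or.inl hφ)))
    rw [hψ] at hv1 ⊢
    rcases hv1 with h1 | h1
    · left
      have hDΔ : D ∈ Δ := by
        by_contra hDn
        have : (fun w => w (S.ab D) = false) v :=
          hv _ (Or.inr ⟨D, Finset.mem_sdiff.2 ⟨hD, hDn⟩, rfl⟩)
        simp only at this
        rw [this] at h1; exact Bool.false_ne_true h1
      rw [if_pos ⟨D, hsub hDΔ, rfl⟩]
    · exact Or.inr ((hψind v _ hoff).1 h1)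
  · have hv1 : φ v := hv φ (Or.inl (Or.inl (Or.inr hφ)))
    exact (hW.2 φ hφ v _ hoff).1 hv1
  · obtain ⟨D, hD, rfl⟩ := hφ
    simp only
    rw [if_pos ⟨D, hD, rfl⟩]
  · obtain ⟨D, hD, rfl⟩ := hφ
    rw [Finset.mem_sdiff] at hD
    simp only
    rw [if_neg]
    · have : (fun w => w (S.ab D) = false) v :=
        hv _ (Or.inr ⟨D, Finset.mem_sdiff.2 ⟨hD.1, fun hc => hD.2 (hsub hc)⟩, rfl⟩)
      exact this
    · rintro ⟨C', hC', hab⟩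
      exact hD.2 (S.ab_inj hab ▸ hC')

/-- Every diagnosis contains a minimal diagnosis. -/
lemma exists_minimal_sub (S : DiagSetting V α) :
    ∀ Δ : Finset α, S.Diagnosis Δ → ∃ Δ' ⊆ Δ, S.MinimalDiagnosis Δ' := by
  classical
  intro Δ
  induction Δ using Finset.strongInductionOn with
  | _ Δ ih =>
    intro hΔ
    by_cases hmin : ∃ Δ'' ⊂ Δ, S.Diagnosis Δ''
    · obtain ⟨Δ'', hss, hd⟩ := hmin
      obtain ⟨Δ', hsub, hm⟩ := ih Δ'' hss hd
      exact ⟨Δ', hsub.trans hss.subset, hm⟩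
    · push_neg at hmin
      exact ⟨Δ, subset_rfl, hΔ, hmin⟩

/-- In a weak model of failure, if `C` is an actual cause then
`Resp(C) = 1/m` where `m` is the minimum cardinality of a minimal diagnosis containing
`C` (the minimum being over a nonempty set). -/
theorem resp_eq_one_div_min_minimalDiagnosis_card
    (S : DiagSetting V α) (hW : S.WeakModel) (C : α) (h : S.ActualCause C) :
    {n : ℕ | ∃ Δ : Finset α, S.MinimalDiagnosis Δ ∧ C ∈ Δ ∧ Δ.card = n}.Nonempty ∧
    S.Resp C =
      1 / ((sInf {n : ℕ | ∃ Δ : Finset α, S.MinimalDiagnosis Δ ∧ C ∈ Δ ∧ Δ.card = n} : ℕ) : ℚ) := by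
  classical
  set A : Set ℕ := {n : ℕ | ∃ Γ : Finset α, S.ContingencySet C Γ ∧ Γ.card = n} with hA
  set B : Set ℕ := {n : ℕ | ∃ Δ : Finset α, S.MinimalDiagnosis Δ ∧ C ∈ Δ ∧ Δ.card = n} with hB
  have hAne : A.Nonempty := by
    obtain ⟨Γ, hΓ⟩ := h
    exact ⟨Γ.card, Γ, hΓ, rfl⟩
  set m := sInf A with hm
  obtain ⟨Γ, hΓ, hΓcard⟩ := Nat.sInf_mem hAne
  obtain ⟨hCc, hΓsub, hΓinc, hΓcons⟩ := hΓ
  have hCnΓ : C ∉ Γ := fun hc => (Finset.mem_erase.1 (hΓsub hc)).1 rfl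
  -- insert C Γ is a diagnosis
  have hdiag : S.Diagnosis (insert C Γ) := by
    refine ⟨?_, hΓcons⟩
    intro x hx
    rcases Finset.mem_insert.1 hx with rfl | hx
    · exact hCc
    · exact Finset.mem_of_mem_erase (hΓsub hx)
  obtain ⟨Δ', hΔ'sub, hΔ'min⟩ := exists_minimal_sub S _ hdiag
  have hCΔ' : C ∈ Δ' := by
    by_contra hc
    have hsub : Δ' ⊆ Γ := fun x hx => by
      rcases Finset.mem_insert.1 (hΔ'sub hx) with rfl | hx'
      · exact absurd hx hc
      · exact hx'
    exact hΓinc (weak_mono S hW hsub (fun x hx => Finset.mem_of_mem_erase (hΓsub hx))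
      hΔ'min.1.2)
  have hBne : B.Nonempty := ⟨Δ'.card, Δ', hΔ'min, hCΔ', rfl⟩
  -- sInf B ≤ m + 1
  have hle : sInf B ≤ m + 1 := by
    have h1 : sInf B ≤ Δ'.card := Nat.sInf_le ⟨Δ', hΔ'min, hCΔ', rfl⟩
    have h2 : Δ'.card ≤ m + 1 := by
      calc Δ'.card ≤ (insert C Γ).card := Finset.card_le_card hΔ'sub
        _ = Γ.card + 1 := Finset.card_insert_of_notMem hCnΓ
        _ = m + 1 := by rw [hΓcard]
    exact h1.trans h2
  -- m + 1 ≤ sInf B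
  have hge : m + 1 ≤ sInf B := by
    refine le_csInf hBne ?_
    rintro n ⟨Δ, hΔmin, hCΔ, rfl⟩
    have herase : S.ContingencySet C (Δ.erase C) := by
      refine ⟨hCc, Finset.erase_subset_erase C hΔmin.1.1, ?_, ?_⟩
      · intro hcons
        exact hΔmin.2 (Δ.erase C) (Finset.erase_ssubset hCΔ)
          ⟨(Finset.erase_subset C Δ).trans hΔmin.1.1, hcons⟩
      · rw [Finset.insert_erase hCΔ]
        exact hΔmin.1.2
    have hmle : m ≤ (Δ.erase C).card := Nat.sInf_le ⟨Δ.erase C, herase, rfl⟩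
    have : (Δ.erase C).card + 1 = Δ.card := by
      rw [Finset.card_erase_of_mem hCΔ]
      exact Nat.succ_pred_eq_of_pos (Finset.card_pos.2 ⟨C, hCΔ⟩)
    omega
  have hBinf : sInf B = m + 1 := le_antisymm hle hge
  refine ⟨hBne, ?_⟩
  rw [DiagSetting.Resp, if_pos h, hBinf]
  push_cast
  ring_nf
  rfl
end
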